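/- arXiv:2605.24705 — 4 statements merged into one kernel-verified Lean document; each statement's English description precedes it below -/
import Mathlib

section
/- For all real numbers q ∈ [0,1] and ε ≥ 0, one has (1 − q)√(1 + εq²) + 1/√(1 + εq²) ≤ 2 − q − εq³/2 + (3/8)ε²q⁴. -/
/-- for `q ∈ [0,1]` and `ε ≥ 0`,
`(1 − q)√(1 + εq²) + 1/√(1 + εq²) ≤ 2 − q − εq³/2 + (3/8)ε²q⁴`. -/
theorem stmt_4 (q ε : ℝ) (hq : q ∈ Set.Icc (0 : ℝ) 1) (hε : 0 ≤ ε) :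
    (1 - q) * Real.sqrt (1 + ε * q ^ 2) + 1 / Real.sqrt (1 + ε * q ^ 2)
      ≤ 2 - q - ε * q ^ 3 / 2 + (3 / 8) * ε ^ 2 * q ^ 4 := by
  obtain ⟨hq0, hq1⟩ := hq
  set x : ℝ := ε * q ^ 2 with hxdef
  have hx : 0 ≤ x := mul_nonneg hε (sq_nonneg q)
  set s : ℝ := Real.sqrt (1 + x) with hsdef
  have hs2 : s ^ 2 = 1 + x := Real.sq_sqrt (by linarith)
  have hs0 : 0 < s := Real.sqrt_pos.mpr (by linarith)
  have h1 : s ≤ 1 + x / 2 := by nlinarith [sq_nonneg (s - 1 - x / 2)]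
  have hr : (0 : ℝ) < 1 - x / 2 + 3 * x ^ 2 / 8 := by nlinarith [sq_nonneg (x - 1)]
  have h4 : (1 : ℝ) ≤ (s * (1 - x / 2 + 3 * x ^ 2 / 8)) ^ 2 := by
    nlinarith [hs2, mul_nonneg (mul_nonneg (mul_nonneg hx hx) hx) (sq_nonneg (3 * x - 5 / 2)),
      mul_nonneg (mul_nonneg hx hx) hx]
  have hsr : 1 ≤ s * (1 - x / 2 + 3 * x ^ 2 / 8) := by
    nlinarith [mul_pos hs0 hr, h4]
  have h2 : 1 / s ≤ 1 - x / 2 + 3 * x ^ 2 / 8 := by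
    rw [div_le_iff₀ hs0]
    linarith [hsr]
  have h3 : (1 - q) * s ≤ (1 - q) * (1 + x / 2) :=
    mul_le_mul_of_nonneg_left h1 (by linarith)
  have hkey : (1 - q) * s + 1 / s ≤ (1 - q) * (1 + x / 2) + (1 - x / 2 + 3 * x ^ 2 / 8) := by
    linarith
  calc (1 - q) * s + 1 / s ≤ (1 - q) * (1 + x / 2) + (1 - x / 2 + 3 * x ^ 2 / 8) := hkey
    _ = 2 - q - ε * q ^ 3 / 2 + (3 / 8) * ε ^ 2 * q ^ 4 := by rw [hxdef]; ring
end

section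
/- Fix ε ≥ 0 and define a : ℝ → ℝ by a(t) = sin t · √(1 + ε sin⁴ t). Then a is smooth and for all t ∈ ℝ, a''(t) = −a(t) · (1 − ε f(sin² t)), where f(q) = (q(10 − 12q) + 2εq³(3 − 4q)) / (1 + εq²)². -/
open Real

/-- `a(t) = sin t · √(1 + ε sin⁴ t)` is smooth and satisfies
`a''(t) = −a(t)(1 − ε f(sin² t))` with
`f(q) = (q(10 − 12q) + 2εq³(3 − 4q))/(1 + εq²)²`. -/
theorem stmt_5 (ε : ℝ) (hε : 0 ≤ ε) :
    ContDiff ℝ (⊤ : ℕ∞) (fun t : ℝ => sin t * Real.sqrt (1 + ε * sin t ^ 4)) ∧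
    ∀ t : ℝ,
      deriv (deriv (fun t : ℝ => sin t * Real.sqrt (1 + ε * sin t ^ 4))) t
        = -(sin t * Real.sqrt (1 + ε * sin t ^ 4)) *
            (1 - ε * ((sin t ^ 2 * (10 - 12 * sin t ^ 2)
                + 2 * ε * (sin t ^ 2) ^ 3 * (3 - 4 * sin t ^ 2))
              / (1 + ε * (sin t ^ 2) ^ 2) ^ 2)) := by
  have hPpos : ∀ t : ℝ, 0 < 1 + ε * sin t ^ 4 := fun t => by positivity
  have hP : ∀ t : ℝ, ContDiff ℝ (⊤ : ℕ∞) (fun t : ℝ => 1 + ε * sin t ^ 4) := fun _ =>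
    contDiff_const.add (contDiff_const.mul (Real.contDiff_sin.pow 4))
  have hsq : ∀ t : ℝ, Real.sqrt (1 + ε * sin t ^ 4) ^ 2 = 1 + ε * sin t ^ 4 :=
    fun t => Real.sq_sqrt (hPpos t).le
  have hs0 : ∀ t : ℝ, Real.sqrt (1 + ε * sin t ^ 4) ≠ 0 :=
    fun t => (Real.sqrt_pos.2 (hPpos t)).ne'
  -- derivative of inner function
  have hDP : ∀ t : ℝ, HasDerivAt (fun t : ℝ => 1 + ε * sin t ^ 4)
      (ε * (4 * sin t ^ 3 * cos t)) t := by
    intro t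
    have h := (((Real.hasDerivAt_sin t).fun_pow 4).const_mul ε).const_add (1 : ℝ)
    exact h.congr_deriv (by norm_num)
  have hDsqrt : ∀ t : ℝ, HasDerivAt (fun t : ℝ => Real.sqrt (1 + ε * sin t ^ 4))
      (1 / (2 * Real.sqrt (1 + ε * sin t ^ 4)) * (ε * (4 * sin t ^ 3 * cos t))) t := by
    intro t
    exact (Real.hasDerivAt_sqrt (hPpos t).ne').comp t (hDP t)
  -- first derivative
  have hDa : ∀ t : ℝ, HasDerivAt (fun t : ℝ => sin t * Real.sqrt (1 + ε * sin t ^ 4))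
      (cos t * (1 + 3 * ε * sin t ^ 4) / Real.sqrt (1 + ε * sin t ^ 4)) t := by
    intro t
    have h := (Real.hasDerivAt_sin t).fun_mul (hDsqrt t)
    refine h.congr_deriv ?_
    have h2 := hsq t
    field_simp
    linear_combination (2 * cos t) * h2
  have hda : deriv (fun t : ℝ => sin t * Real.sqrt (1 + ε * sin t ^ 4))
      = fun t => cos t * (1 + 3 * ε * sin t ^ 4) / Real.sqrt (1 + ε * sin t ^ 4) :=
    funext fun t => (hDa t).deriv
  constructor
  · refine Real.contDiff_sin.mul ?_
    rw [contDiff_iff_contDiffAt]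
    intro t
    exact (Real.contDiffAt_sqrt (hPpos t).ne').comp t (hP t).contDiffAt
  · intro t
    rw [hda]
    -- derivative of the quotient
    have hnum : HasDerivAt (fun t : ℝ => cos t * (1 + 3 * ε * sin t ^ 4))
        (-sin t * (1 + 3 * ε * sin t ^ 4) + cos t * (12 * ε * sin t ^ 3 * cos t)) t := by
      have h1 : HasDerivAt (fun t : ℝ => 1 + 3 * ε * sin t ^ 4)
          (12 * ε * sin t ^ 3 * cos t) t := by
        have h := (((Real.hasDerivAt_sin t).fun_pow 4).const_mul (3 * ε)).const_add (1 : ℝ)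
        exact h.congr_deriv (by norm_num; ring)
        try push_cast
        try ring
      exact (Real.hasDerivAt_cos t).mul h1
    have hB := hnum.fun_div (hDsqrt t) (hs0 t)
    rw [hB.deriv]
    have h2 := hsq t
    have hc := Real.cos_sq' t
    have h0 := hs0 t
    field_simp
    rw [show √(1 + sin t ^ 4 * ε) ^ 4 = (√(1 + sin t ^ 4 * ε) ^ 2) ^ 2 by ring, Real.sq_sqrt (by positivity)]
    linear_combination (sin t * (1 + sin t ^ 4 * ε) ^ 2 * (24 * ε * sin t ^ 2 * (1 + sin t ^ 4 * ε) - 4 * ε * sin t ^ 2 * (1 + 3 * ε * sin t ^ 4))) * hc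
end

section
/- Let d ≥ 4 be an integer, δ = √(d−2), I_m = ∫₀^{π/2} sin^m t dt, and J₀ = ∫₀^∞ e^{−τ²/2} dτ. Then 2δ^d I_{d+1} + 2δ^{d−1} J₀ − δ^{d−2} ∫₀^{π/2} (cos²t + d − 1) sin^{d−1}t dt − (d−1) δ^{d−3} J₀ = δ^{d−2} · (d(d−4)/(d+1)) · I_{d−1} + δ^{d−3}(d−3) J₀ > 0. -/
open Real MeasureTheory

/-- with `δ = √(d−2)`, `I_m = ∫₀^{π/2} sin^m t dt`,
`J₀ = ∫₀^∞ e^{−τ²/2} dτ`, the spectral-gap quantity for the angular test functions equals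
`δ^{d−2}(d(d−4)/(d+1))I_{d−1} + δ^{d−3}(d−3)J₀` and is strictly positive. -/
theorem stmt_17 (d : ℕ) (hd : 4 ≤ d) (δ : ℝ) (hδ : δ = Real.sqrt ((d : ℝ) - 2))
    (I : ℕ → ℝ) (hI : ∀ m : ℕ, I m = ∫ t in (0 : ℝ)..(π / 2), sin t ^ m)
    (J₀ : ℝ) (hJ : J₀ = ∫ τ in Set.Ioi (0 : ℝ), Real.exp (-(τ ^ 2 / 2))) :
    2 * δ ^ d * I (d + 1) + 2 * δ ^ (d - 1) * J₀
        - δ ^ (d - 2) *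
            (∫ t in (0 : ℝ)..(π / 2), (cos t ^ 2 + (d : ℝ) - 1) * sin t ^ (d - 1))
        - ((d : ℝ) - 1) * δ ^ (d - 3) * J₀
      = δ ^ (d - 2) * ((d : ℝ) * ((d : ℝ) - 4) / ((d : ℝ) + 1)) * I (d - 1)
          + δ ^ (d - 3) * ((d : ℝ) - 3) * J₀ ∧
    0 < δ ^ (d - 2) * ((d : ℝ) * ((d : ℝ) - 4) / ((d : ℝ) + 1)) * I (d - 1)
          + δ ^ (d - 3) * ((d : ℝ) - 3) * J₀ := by
  obtain ⟨e, rfl⟩ : ∃ e, d = e + 4 := ⟨d - 4, by omega⟩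
  -- basic facts about δ
  have hcast : ((e + 4 : ℕ) : ℝ) = (e : ℝ) + 4 := by push_cast; ring
  have hδnn : 0 ≤ δ := hδ ▸ Real.sqrt_nonneg _
  have hδ2 : δ ^ 2 = (e : ℝ) + 2 := by
    rw [hδ, Real.sq_sqrt]
    · push_cast; ring
    · have : (0:ℝ) ≤ (e:ℝ) := Nat.cast_nonneg e
      push_cast; linarith
  have hδpos : 0 < δ := by
    rcases hδnn.lt_or_eq with h | h
    · exact h
    · exfalso; have : (0:ℝ)^2 = (e:ℝ) + 2 := by rw [h]; exact hδ2
      simp at this; nlinarith [Nat.cast_nonneg (α := ℝ) e]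
  -- simplify nat subtractions in exponents
  have h1 : e + 4 - 1 = e + 3 := rfl
  have h2 : e + 4 - 2 = e + 2 := rfl
  have h3 : e + 4 - 3 = e + 1 := rfl
  rw [h1, h2, h3, hcast]
  -- J₀ is positive
  have hJval : J₀ = Real.sqrt (π / (1/2)) / 2 := by
    rw [hJ, ← integral_gaussian_Ioi (1/2)]
    congr 1 with τ; ring_nf
  have hJpos : 0 < J₀ := by
    rw [hJval]; positivity
  -- Wallis recursion
  have hWallis : I (e + 5) = (((e:ℝ) + 4) / ((e:ℝ) + 5)) * I (e + 3) := by
    have h := integral_sin_pow (a := 0) (b := π/2) (e + 3)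
    simp only [Real.sin_zero, Real.cos_pi_div_two, mul_zero, zero_mul,
      zero_pow (Nat.succ_ne_zero (e + 3)), zero_sub, neg_zero, zero_div, zero_add] at h
    rw [hI (e+5), hI (e+3), show e + 5 = e + 3 + 2 from rfl, h]
    congr 1
    push_cast
    ring
  -- the mixed integral
  have hintg : ∀ m : ℕ, IntervalIntegrable (fun t => sin t ^ m) volume 0 (π/2) :=
    fun m => (continuous_sin.pow m).intervalIntegrable _ _
  have hC : (∫ t in (0 : ℝ)..(π / 2), (cos t ^ 2 + ((e:ℝ) + 4) - 1) * sin t ^ (e + 3))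
      = ((e:ℝ) + 4) * I (e + 3) - I (e + 5) := by
    have heq : ∀ t : ℝ, (cos t ^ 2 + ((e:ℝ) + 4) - 1) * sin t ^ (e + 3)
        = ((e:ℝ) + 4) * sin t ^ (e + 3) - sin t ^ (e + 5) := by
      intro t
      have := Real.cos_sq' t
      rw [this]
      ring
    rw [intervalIntegral.integral_congr (g := fun t =>
        ((e:ℝ) + 4) * sin t ^ (e + 3) - sin t ^ (e + 5)) (fun t _ => heq t),
      intervalIntegral.integral_sub ((hintg (e+3)).const_mul _) (hintg (e+5)),
      intervalIntegral.integral_const_mul, hI (e+3), hI (e+5)]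
  rw [hC, hWallis]
  -- I (e+3) is nonnegative
  have hInn : 0 ≤ I (e + 3) := by
    rw [hI (e+3)]
    apply intervalIntegral.integral_nonneg (by positivity)
    intro t ht
    have : 0 ≤ sin t := Real.sin_nonneg_of_nonneg_of_le_pi ht.1
      (ht.2.trans (by linarith [Real.pi_pos]))
    positivity
  constructor
  · -- the identity; express all powers of δ via δ^(e+1) and δ^2
    have p2 : δ ^ (e + 2) = δ ^ (e + 1) * δ := by ring
    have p3 : δ ^ (e + 3) = δ ^ (e + 1) * ((e:ℝ) + 2) := by
      rw [show δ ^ (e+3) = δ ^ (e+1) * δ ^ 2 by ring, hδ2]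
    have p4 : δ ^ (e + 4) = δ ^ (e + 1) * δ * ((e:ℝ) + 2) := by
      rw [show δ ^ (e+4) = δ ^ (e+1) * δ * δ ^ 2 by ring, hδ2]
    rw [p2, p3, p4]
    have h5 : ((e:ℝ) + 5) ≠ 0 := by positivity
    field_simp
    ring
  · -- positivity
    apply add_pos_of_nonneg_of_pos
    · apply mul_nonneg (mul_nonneg (by positivity) _) hInn
      have : (0:ℝ) ≤ (e:ℝ) := Nat.cast_nonneg e
      have h40 : (0:ℝ) ≤ ((e:ℝ) + 4) * ((e:ℝ) + 4 - 4) := by nlinarith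
      positivity
    · have : (0:ℝ) < (e:ℝ) + 4 - 3 := by
        have : (0:ℝ) ≤ (e:ℝ) := Nat.cast_nonneg e
        linarith
      positivity
end

section
/- Let d ≥ 4 be an integer, δ = √(d−2), A = δ/d, I_m = ∫₀^{π/2} sin^m t dt, and J₀ = ∫₀^∞ e^{−τ²/2} dτ. Then 2δ^d ∫₀^{π/2} cos²t sin^{d−1}t dt + 2δ^{d−1}A² J₀ − δ^{d−2} I_{d+1} − δ^{d−1}A² J₀ = δ^{d−2} · ((d−4)/(d+1)) · I_{d−1} + (δ^{d+1}/d²) J₀ > 0. -/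
open Real MeasureTheory

/-- with `δ = √(d−2)`, `A = δ/d`, `I_m = ∫₀^{π/2} sin^m t dt`,
`J₀ = ∫₀^∞ e^{−τ²/2} dτ`, the spectral-gap quantity for the radial test function equals
`δ^{d−2}((d−4)/(d+1))I_{d−1} + (δ^{d+1}/d²)J₀` and is strictly positive. -/
theorem stmt_18 (d : ℕ) (hd : 4 ≤ d) (δ : ℝ) (hδ : δ = Real.sqrt ((d : ℝ) - 2))
    (A : ℝ) (hA : A = δ / d)
    (I : ℕ → ℝ) (hI : ∀ m : ℕ, I m = ∫ t in (0 : ℝ)..(π / 2), sin t ^ m)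
    (J₀ : ℝ) (hJ : J₀ = ∫ τ in Set.Ioi (0 : ℝ), Real.exp (-(τ ^ 2 / 2))) :
    2 * δ ^ d * (∫ t in (0 : ℝ)..(π / 2), cos t ^ 2 * sin t ^ (d - 1))
        + 2 * δ ^ (d - 1) * A ^ 2 * J₀
        - δ ^ (d - 2) * I (d + 1) - δ ^ (d - 1) * A ^ 2 * J₀
      = δ ^ (d - 2) * (((d : ℝ) - 4) / ((d : ℝ) + 1)) * I (d - 1)
          + (δ ^ (d + 1) / (d : ℝ) ^ 2) * J₀ ∧
    0 < δ ^ (d - 2) * (((d : ℝ) - 4) / ((d : ℝ) + 1)) * I (d - 1)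
          + (δ ^ (d + 1) / (d : ℝ) ^ 2) * J₀ := by
  obtain ⟨k, rfl⟩ : ∃ k, d = k + 4 := ⟨d - 4, by omega⟩
  have hd2 : ((k + 4 : ℕ) : ℝ) - 2 = (k : ℝ) + 2 := by push_cast; ring
  have hδ2 : δ ^ 2 = (k : ℝ) + 2 := by
    rw [hδ, hd2, sq_sqrt (by positivity)]
  have hδpos : 0 < δ := by
    rw [hδ, hd2]; exact Real.sqrt_pos.mpr (by positivity)
  have hrec : I (k + 4 + 1) = ((k : ℝ) + 4) / ((k : ℝ) + 5) * I (k + 4 - 1) := by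
    have := integral_sin_pow (a := 0) (b := π/2) (k + 3)
    simp only [Real.sin_zero, Real.cos_pi_div_two] at this
    rw [hI, hI]
    norm_num at this ⊢
    convert this using 2 <;> push_cast <;> ring
  have hcos : (∫ t in (0 : ℝ)..(π / 2), cos t ^ 2 * sin t ^ (k + 4 - 1))
      = I (k + 4 - 1) - I (k + 4 + 1) := by
    rw [hI, hI, ← intervalIntegral.integral_sub]
    · apply intervalIntegral.integral_congr
      intro t _
      simp only
      rw [Real.cos_sq']
      have : k + 4 + 1 = (k + 4 - 1) + 2 := by omega
      rw [this]
      ring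
    · exact (continuous_sin.pow _).intervalIntegrable _ _
    · exact (continuous_sin.pow _).intervalIntegrable _ _
  have hIpos : 0 < I (k + 4 - 1) := by
    rw [hI]
    apply intervalIntegral.intervalIntegral_pos_of_pos_on
    · exact (continuous_sin.pow _).intervalIntegrable _ _
    · intro x hx
      exact pow_pos (Real.sin_pos_of_pos_of_lt_pi hx.1 (lt_trans hx.2 (by linarith [pi_pos]))) _
    · linarith [pi_pos]
  have hJpos : 0 < J₀ := by
    rw [hJ]
    have hint : IntegrableOn (fun τ : ℝ => Real.exp (-(τ ^ 2 / 2))) (Set.Ioi 0) := by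
      have := (integrable_exp_neg_mul_sq (by norm_num : (0:ℝ) < 1/2)).integrableOn
        (s := Set.Ioi (0:ℝ))
      convert this using 2 with τ
      ring_nf
    rw [setIntegral_pos_iff_support_of_nonneg_ae]
    · have : Function.support (fun τ : ℝ => Real.exp (-(τ ^ 2 / 2))) = Set.univ := by
        ext τ; simp [Function.support, (Real.exp_pos _).ne']
      rw [this, Set.univ_inter]
      simp [Real.volume_Ioi]
    · exact Filter.Eventually.of_forall fun τ => (Real.exp_pos _).le
    · exact hint
  have hA2 : A ^ 2 = ((k : ℝ) + 2) / ((k : ℝ) + 4) ^ 2 := by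
    rw [hA, div_pow, hδ2]; push_cast; ring
  have e1 : δ ^ (k + 4) = δ ^ (k + 2) * ((k : ℝ) + 2) := by
    rw [show k + 4 = (k + 2) + 2 by omega, pow_add, hδ2]
  have e2 : δ ^ (k + 4 - 1) = δ ^ (k + 2) * δ := by
    rw [show k + 4 - 1 = (k + 2) + 1 by omega, pow_succ]
  have e3 : k + 4 - 2 = k + 2 := by omega
  have e4 : δ ^ (k + 4 + 1) = δ ^ (k + 2) * δ * ((k : ℝ) + 2) := by
    rw [show k + 4 + 1 = ((k + 2) + 1) + 2 by omega, pow_add, pow_succ, hδ2]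
  constructor
  · rw [hcos, hrec, hA2, e1, e2, e3, e4]
    push_cast
    have h45 : ((k:ℝ) + 5) ≠ 0 := by positivity
    have h44 : ((k:ℝ) + 4) ≠ 0 := by positivity
    field_simp
    ring
  · rw [e3, e4]
    have h1 : 0 ≤ δ ^ (k + 2) * ((((k + 4 : ℕ) : ℝ)) - 4) / (((k + 4 : ℕ) : ℝ) + 1) * I (k + 4 - 1) := by
      apply mul_nonneg _ hIpos.le
      apply div_nonneg _ (by positivity)
      apply mul_nonneg (by positivity)
      push_cast; linarith
    have h2 : 0 < (δ ^ (k + 2) * δ * ((k : ℝ) + 2) / ((k + 4 : ℕ) : ℝ) ^ 2) * J₀ := by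
      apply mul_pos _ hJpos
      apply div_pos _ (by positivity)
      positivity
    calc (0:ℝ) < δ ^ (k + 2) * δ * ((k : ℝ) + 2) / ((k + 4 : ℕ) : ℝ) ^ 2 * J₀ := h2
    _ ≤ _ := by
      have : δ ^ (k + 2) * ((((k + 4 : ℕ) : ℝ)) - 4) / (((k + 4 : ℕ) : ℝ) + 1) * I (k + 4 - 1)
          = δ ^ (k + 2) * (((((k + 4 : ℕ) : ℝ)) - 4) / (((k + 4 : ℕ) : ℝ) + 1)) * I (k + 4 - 1) := by
        ring
      linarith [this ▸ h1]
end
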